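/- Let (c^C_{DE})_{C,D,E ∈ {1,…,n}} be scalars antisymmetric in the lower indices (c^C_{DE} = −c^C_{ED}). Then for all indices A, B ∈ {1,…,n}: (1/2) Σ_{C,D,E} c^C_{DE} e^D ∧ e^E ∧ e^{(n-3)}_{ABC} = Σ_C c^C_{BC} e^{(n-1)}_A − Σ_C c^C_{AC} e^{(n-1)}_B + Σ_C c^C_{AB} e^{(n-1)}_C. -/

import Mathlib

noncomputable section

variable (𝕂 : Type*) [Field 𝕂] [CharZero 𝕂] (E : Type*) [AddCommGroup E] [Module 𝕂 E]

/-- Iterated interior product: `icontr [X₁, …, X_p] α = i_{X_p}(⋯(i_{X₁} α))`; this realises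
the interior product `(X₁ ∧ ⋯ ∧ X_p) ⌟ α` of a decomposable `p`-vector of the dual space
against `α`, where `i_X` contracts the first argument of `α` with `X`. -/
def icontr (L : List (Module.Dual 𝕂 E)) (α : ExteriorAlgebra 𝕂 E) : ExteriorAlgebra 𝕂 E :=
  L.foldl (fun a d => CliffordAlgebra.contractLeft d a) α

/-- The wedge product of a list of vectors, as an element of the exterior algebra. -/
def wedgeList (v : List E) : ExteriorAlgebra 𝕂 E := (v.map (ExteriorAlgebra.ι 𝕂)).prod

variable {n : ℕ}

/-- `vol := e^1 ∧ ⋯ ∧ e^n`. -/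
def volB (e : Module.Basis (Fin n) 𝕂 E) : ExteriorAlgebra 𝕂 E :=
  wedgeList 𝕂 E ((List.finRange n).map e)

/-- The dual form `e^{(n-p)}_{A₁…A_p} := (u_{A₁} ∧ ⋯ ∧ u_{A_p}) ⌟ vol`, for an arbitrary
list of indices `A₁, …, A_p`. -/
def dualFormL (e : Module.Basis (Fin n) 𝕂 E) (L : List (Fin n)) : ExteriorAlgebra 𝕂 E :=
  icontr 𝕂 E (L.map e.dualBasis) (volB 𝕂 E e)

/-! Wedging with a vector peels off one contraction at a time: since `x ∧ vol = 0`, the Leibniz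
rule `x ∧ (u ⌟ α) = u(x) α - u ⌟ (x ∧ α)` expresses `e^D ∧ e^E ∧ e^{(n-3)}_{ABC}` as a combination
of the `e^{(n-1)}` with Kronecker-delta coefficients. Summing against `c^C_{DE}` leaves
`c^C_{BC} - c^C_{CB}` and its analogues, which antisymmetry turns into twice the right-hand
side. -/

variable {𝕂 E}

open CliffordAlgebra

local notation "ιv" => ExteriorAlgebra.ι 𝕂

section
omit [CharZero 𝕂]

theorem ι_mul_contractLeft (d : Module.Dual 𝕂 E) (x : E) (α : ExteriorAlgebra 𝕂 E) :
    ιv x * contractLeft d α = d x • α - contractLeft d (ιv x * α) := by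
  rw [contractLeft_ι_mul (Q := 0)]
  abel

theorem dualFormL_append_singleton (e : Module.Basis (Fin n) 𝕂 E) (L : List (Fin n)) (X : Fin n) :
    dualFormL 𝕂 E e (L ++ [X]) = contractLeft (e.dualBasis X) (dualFormL 𝕂 E e L) := by
  simp [dualFormL, icontr]

theorem dualFormL_nil (e : Module.Basis (Fin n) 𝕂 E) : dualFormL 𝕂 E e [] = volB 𝕂 E e := rfl

theorem ι_mul_volB (e : Module.Basis (Fin n) 𝕂 E) (x : E) : ιv x * volB 𝕂 E e = 0 := by
  have basis_mul (D : Fin n) : ιv (e D) * volB 𝕂 E e = 0 := by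
    simpa [volB, wedgeList, List.ofFn_eq_map, Function.comp_def] using
      ExteriorAlgebra.ι_mul_prod_list (R := 𝕂) (fun i => e i) D
  rw [← e.sum_repr x, map_sum, Finset.sum_mul]
  exact Finset.sum_eq_zero fun D _ => by rw [map_smul, smul_mul_assoc, basis_mul, smul_zero]

theorem ι_mul_dualFormL_append_singleton (e : Module.Basis (Fin n) 𝕂 E) (x : E)
    (L : List (Fin n)) (X : Fin n) :
    ιv x * dualFormL 𝕂 E e (L ++ [X])
      = e.dualBasis X x • dualFormL 𝕂 E e L
        - contractLeft (e.dualBasis X) (ιv x * dualFormL 𝕂 E e L) := by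
  rw [dualFormL_append_singleton, ι_mul_contractLeft]

theorem ι_mul_dualFormL_one (e : Module.Basis (Fin n) 𝕂 E) (x : E) (X : Fin n) :
    ιv x * dualFormL 𝕂 E e [X] = e.dualBasis X x • volB 𝕂 E e := by
  rw [← List.nil_append [X], ι_mul_dualFormL_append_singleton, dualFormL_nil, ι_mul_volB,
    map_zero, sub_zero]

theorem ι_mul_dualFormL_two (e : Module.Basis (Fin n) 𝕂 E) (x : E) (X Y : Fin n) :
    ιv x * dualFormL 𝕂 E e [X, Y]
      = e.dualBasis Y x • dualFormL 𝕂 E e [X] - e.dualBasis X x • dualFormL 𝕂 E e [Y] := by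
  rw [← List.singleton_append, ι_mul_dualFormL_append_singleton, ι_mul_dualFormL_one, map_smul,
    ← dualFormL_nil, ← dualFormL_append_singleton, List.nil_append]

theorem ι_mul_dualFormL_three (e : Module.Basis (Fin n) 𝕂 E) (x : E) (X Y Z : Fin n) :
    ιv x * dualFormL 𝕂 E e [X, Y, Z]
      = e.dualBasis Z x • dualFormL 𝕂 E e [X, Y] - e.dualBasis Y x • dualFormL 𝕂 E e [X, Z]
        + e.dualBasis X x • dualFormL 𝕂 E e [Y, Z] := by
  rw [show [X, Y, Z] = [X, Y] ++ [Z] from rfl, ι_mul_dualFormL_append_singleton,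
    ι_mul_dualFormL_two, map_sub, map_smul, map_smul, ← dualFormL_append_singleton,
    ← dualFormL_append_singleton]
  simp only [List.cons_append, List.nil_append]
  abel

theorem ι_mul_ι_mul_dualFormL_three (e : Module.Basis (Fin n) 𝕂 E) (x y : E) (A B C : Fin n) :
    ιv x * ιv y * dualFormL 𝕂 E e [A, B, C]
      = (e.dualBasis B x * e.dualBasis C y - e.dualBasis C x * e.dualBasis B y)
            • dualFormL 𝕂 E e [A]
        - (e.dualBasis A x * e.dualBasis C y - e.dualBasis C x * e.dualBasis A y)
            • dualFormL 𝕂 E e [B]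
        + (e.dualBasis A x * e.dualBasis B y - e.dualBasis B x * e.dualBasis A y)
            • dualFormL 𝕂 E e [C] := by
  rw [mul_assoc, ι_mul_dualFormL_three, mul_add, mul_sub, mul_smul_comm, mul_smul_comm,
    mul_smul_comm, ι_mul_dualFormL_two, ι_mul_dualFormL_two, ι_mul_dualFormL_two]
  module

theorem sum_sum_mul_dualBasis_sub_dualBasis (e : Module.Basis (Fin n) 𝕂 E)
    (k : Fin n → Fin n → 𝕂) (X Y : Fin n) :
    ∑ D : Fin n, ∑ E' : Fin n, k D E'
        * (e.dualBasis X (e D) * e.dualBasis Y (e E') - e.dualBasis Y (e D) * e.dualBasis X (e E'))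
      = k X Y - k Y X := by
  simp only [Module.Basis.dualBasis_apply_self, mul_sub, Finset.sum_sub_distrib, mul_ite,
    mul_one, mul_zero, Finset.sum_ite_eq', Finset.mem_univ, if_true]

theorem sum_sum_smul_ι_mul_ι_mul_dualFormL_three (e : Module.Basis (Fin n) 𝕂 E)
    (k : Fin n → Fin n → 𝕂) (A B C : Fin n) :
    ∑ D : Fin n, ∑ E' : Fin n, k D E' • (ιv (e D) * ιv (e E') * dualFormL 𝕂 E e [A, B, C])
      = (k B C - k C B) • dualFormL 𝕂 E e [A] - (k A C - k C A) • dualFormL 𝕂 E e [B]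
        + (k A B - k B A) • dualFormL 𝕂 E e [C] := by
  simp only [ι_mul_ι_mul_dualFormL_three, smul_add, smul_sub, smul_smul, Finset.sum_add_distrib,
    Finset.sum_sub_distrib, ← Finset.sum_smul, ← sum_sum_mul_dualBasis_sub_dualBasis e k]

end

/-- for scalars `c^C_{DE}` antisymmetric in the lower indices,
`(1/2) Σ_{C,D,E} c^C_{DE} e^D ∧ e^E ∧ e^{(n-3)}_{ABC}
  = Σ_C c^C_{BC} e^{(n-1)}_A − Σ_C c^C_{AC} e^{(n-1)}_B + Σ_C c^C_{AB} e^{(n-1)}_C`. -/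
theorem structure_constants_contraction_identity
    (e : Module.Basis (Fin n) 𝕂 E) (c : Fin n → Fin n → Fin n → 𝕂)
    (hanti : ∀ C D E' : Fin n, c C D E' = - c C E' D) (A B : Fin n) :
    ((1 : 𝕂) / 2) • ∑ C : Fin n, ∑ D : Fin n, ∑ E' : Fin n,
        c C D E' •
          (ExteriorAlgebra.ι 𝕂 (e D) * ExteriorAlgebra.ι 𝕂 (e E') * dualFormL 𝕂 E e [A, B, C])
      = (∑ C : Fin n, c C B C • dualFormL 𝕂 E e [A])
          - (∑ C : Fin n, c C A C • dualFormL 𝕂 E e [B])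
          + ∑ C : Fin n, c C A B • dualFormL 𝕂 E e [C] := by
  have sub_swap (C X Y : Fin n) : c C X Y - c C Y X = 2 * c C X Y := by rw [hanti C Y X]; ring
  simp only [sum_sum_smul_ι_mul_ι_mul_dualFormL_three, sub_swap, Finset.sum_add_distrib,
    Finset.sum_sub_distrib, smul_add, smul_sub, Finset.smul_sum, smul_smul,
    one_div, inv_mul_cancel_left₀ (two_ne_zero : (2 : 𝕂) ≠ 0)]
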